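/- The square of the Pfaffian of a 2n×2n skew-symmetric matrix equals its determinant: Pf(A)^2 = det(A). -/

import Mathlib

open Matrix

/-- The Pfaffian of a `2n × 2n` matrix, defined by
`Pf(A) = (1/(2^n n!)) ∑_{σ ∈ S_{2n}} sgn(σ) ∏_{j=0}^{n-1} A_{σ(2j), σ(2j+1)}`. -/
noncomputable def pf (n : ℕ) (A : Matrix (Fin (2 * n)) (Fin (2 * n)) ℝ) : ℝ :=
  (1 / ((2 : ℝ) ^ n * n.factorial)) *
    ∑ σ : Equiv.Perm (Fin (2 * n)),
      ((Equiv.Perm.sign σ : ℤ) : ℝ) *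
        ∏ j : Fin n,
          A (σ ⟨2 * j.1, by have := j.isLt; omega⟩) (σ ⟨2 * j.1 + 1, by have := j.isLt; omega⟩)

namespace PfP

def pr {n : ℕ} (j : Fin n) (b : Fin 2) : Fin (2*n) := ⟨2*j.1+b.1, by have := j.isLt; have := b.isLt; omega⟩

@[simp] lemma pr_val {n : ℕ} (j : Fin n) (b : Fin 2) : (pr j b).1 = 2*j.1+b.1 := rfl

lemma pr_inj {n : ℕ} {j j' : Fin n} {b b' : Fin 2} : pr j b = pr j' b' ↔ (j = j' ∧ b = b') := by
  have hb := b.isLt; have hb' := b'.isLt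
  constructor
  · intro h
    rw [Fin.ext_iff] at h
    simp only [pr] at h
    constructor <;> (ext; omega)
  · rintro ⟨rfl, rfl⟩; rfl

lemma pr_ne_of {n : ℕ} {j j' : Fin n} {b b' : Fin 2} (h : ¬(j.1 = j'.1 ∧ b.1 = b'.1)) :
    pr j b ≠ pr j' b' := by
  intro hh
  rw [pr_inj] at hh
  exact h ⟨congrArg Fin.val hh.1, congrArg Fin.val hh.2⟩

def pE (n : ℕ) : Fin n × Fin 2 ≃ Fin (2*n) where
  toFun x := pr x.1 x.2
  invFun a := (⟨a.1/2, by have := a.isLt; omega⟩, ⟨a.1%2, by omega⟩)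
  left_inv x := by
    have := x.2.isLt
    ext <;> simp [pr] <;> omega
  right_inv a := by ext; simp [pr]; omega

@[simp] lemma pE_apply {n : ℕ} (j : Fin n) (b : Fin 2) : pE n (j, b) = pr j b := rfl

@[simp] lemma pE_symm_pr {n : ℕ} (j : Fin n) (b : Fin 2) : (pE n).symm (pr j b) = (j, b) := by
  rw [Equiv.symm_apply_eq]; rfl

noncomputable def pfS (n : ℕ) (A : Matrix (Fin (2*n)) (Fin (2*n)) ℝ) : ℝ :=
  ∑ σ : Equiv.Perm (Fin (2*n)), ((Equiv.Perm.sign σ : ℤ) : ℝ) * ∏ j : Fin n, A (σ (pr j 0)) (σ (pr j 1))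

lemma pf_eq (n : ℕ) (A : Matrix (Fin (2*n)) (Fin (2*n)) ℝ) :
    pf n A = (1 / ((2:ℝ)^n * n.factorial)) * pfS n A := rfl

def Φ (n : ℕ) : (Fin n → Fin (2*n) × Fin (2*n)) ≃ (Fin (2*n) → Fin (2*n)) where
  toFun g a := if ((pE n).symm a).2 = 0 then (g ((pE n).symm a).1).1 else (g ((pE n).symm a).1).2
  invFun f j := (f (pr j 0), f (pr j 1))
  left_inv g := by funext j; simp
  right_inv f := by
    funext a
    obtain ⟨⟨j, b⟩, rfl⟩ := (pE n).surjective a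
    fin_cases b <;> simp

@[simp] lemma Φ_pr0 {n : ℕ} (g : Fin n → Fin (2*n) × Fin (2*n)) (j : Fin n) :
    Φ n g (pr j 0) = (g j).1 := by simp [Φ]

@[simp] lemma Φ_pr1 {n : ℕ} (g : Fin n → Fin (2*n) × Fin (2*n)) (j : Fin n) :
    Φ n g (pr j 1) = (g j).2 := by simp [Φ]

theorem pfS_conj (n : ℕ) (A B : Matrix (Fin (2*n)) (Fin (2*n)) ℝ) :
    pfS n (Bᵀ * A * B) = B.det * pfS n A := by
  classical
  have hent : ∀ p q, (Bᵀ * A * B) p q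
      = ∑ kl : Fin (2*n) × Fin (2*n), B kl.1 p * A kl.1 kl.2 * B kl.2 q := by
    intro p q
    rw [Fintype.sum_prod_type, Finset.sum_comm]
    simp [Matrix.mul_apply, Finset.sum_mul]
  unfold pfS
  simp only [hent]
  have step2 : ∀ σ : Equiv.Perm (Fin (2*n)),
      (∏ j : Fin n, ∑ kl : Fin (2*n) × Fin (2*n),
        B kl.1 (σ (pr j 0)) * A kl.1 kl.2 * B kl.2 (σ (pr j 1)))
      = ∑ g : Fin n → Fin (2*n) × Fin (2*n),
          ∏ j : Fin n, B (g j).1 (σ (pr j 0)) * A (g j).1 (g j).2 * B (g j).2 (σ (pr j 1)) := by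
    intro σ
    rw [Finset.prod_univ_sum]
    rw [Fintype.piFinset_univ]
  simp only [step2, Finset.mul_sum]
  rw [Finset.sum_comm]
  have step4 : ∀ (g : Fin n → Fin (2*n) × Fin (2*n)) (σ : Equiv.Perm (Fin (2*n))),
      (∏ j : Fin n, B (g j).1 (σ (pr j 0)) * A (g j).1 (g j).2 * B (g j).2 (σ (pr j 1)))
      = (∏ j : Fin n, A (g j).1 (g j).2) * ∏ a, B (Φ n g a) (σ a) := by
    intro g σ
    have hB : (∏ a, B (Φ n g a) (σ a))
        = ∏ j : Fin n, (B (g j).1 (σ (pr j 0)) * B (g j).2 (σ (pr j 1))) := by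
      rw [← Equiv.prod_comp (pE n) (fun a => B (Φ n g a) (σ a))]
      rw [Fintype.prod_prod_type]
      apply Finset.prod_congr rfl
      intro j _
      rw [Fin.prod_univ_two]
      simp
    rw [hB, ← Finset.prod_mul_distrib]
    apply Finset.prod_congr rfl
    intro j _
    ring
  simp only [step4]
  have step5 : ∀ g : Fin n → Fin (2*n) × Fin (2*n),
      (∑ σ : Equiv.Perm (Fin (2*n)), ((Equiv.Perm.sign σ : ℤ) : ℝ)
        * ((∏ j : Fin n, A (g j).1 (g j).2) * ∏ a, B (Φ n g a) (σ a)))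
      = (∏ j : Fin n, A (g j).1 (g j).2) * (Bᵀ.submatrix id (Φ n g)).det := by
    intro g
    rw [Matrix.det_apply', Finset.mul_sum]
    apply Finset.sum_congr rfl
    intro σ _
    simp [Matrix.submatrix_apply]
    ring
  simp only [step5]
  -- reindex over f := Φ n g
  set G : (Fin (2*n) → Fin (2*n)) → ℝ :=
    fun f => (∏ j : Fin n, A (f (pr j 0)) (f (pr j 1))) * (Bᵀ.submatrix id f).det with hG
  have step6 : (∑ g : Fin n → Fin (2*n) × Fin (2*n),
      (∏ j : Fin n, A (g j).1 (g j).2) * (Bᵀ.submatrix id (Φ n g)).det)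
      = ∑ f : Fin (2*n) → Fin (2*n), G f := by
    rw [← Equiv.sum_comp (Φ n) G]
    apply Finset.sum_congr rfl
    intro g _
    simp [hG]
  rw [step6]
  have step7 : (∑ f : Fin (2*n) → Fin (2*n), G f)
      = ∑ f ∈ Finset.univ.filter (fun f : Fin (2*n) → Fin (2*n) => Function.Injective f), G f := by
    symm
    apply Finset.sum_subset (Finset.filter_subset _ _)
    intro f _ hf
    rw [Finset.mem_filter] at hf
    push_neg at hf
    have hni : ¬ Function.Injective f := by
      intro h; exact hf (Finset.mem_univ f) h
    rw [Function.not_injective_iff] at hni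
    obtain ⟨i, i', hii', hne⟩ := hni
    have : (Bᵀ.submatrix id f).det = 0 := by
      apply Matrix.det_zero_of_column_eq hne
      intro k
      simp [Matrix.submatrix_apply, hii']
    simp [hG, this]
  rw [step7]
  have step8 : (∑ f ∈ Finset.univ.filter (fun f : Fin (2*n) → Fin (2*n) => Function.Injective f), G f)
      = ∑ e : Equiv.Perm (Fin (2*n)), G ⇑e := by
    symm
    apply Finset.sum_bij (fun (e : Equiv.Perm (Fin (2*n))) _ => ⇑e)
    · intro e _
      simp [Finset.mem_filter, e.injective]
    · intro e _ e' _ h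
      exact Equiv.coe_fn_injective h
    · intro f hf
      rw [Finset.mem_filter] at hf
      have hb : Function.Bijective f := Finite.injective_iff_bijective.mp hf.2
      exact ⟨Equiv.ofBijective f hb, Finset.mem_univ _, rfl⟩
    · intro e _
      rfl
  rw [step8]
  apply Finset.sum_congr rfl
  intro e _
  have hd : (Bᵀ.submatrix id ⇑e).det = ((Equiv.Perm.sign e : ℤ) : ℝ) * B.det := by
    rw [Matrix.det_permute', Matrix.det_transpose]
  simp only [hG, hd]
  ring


lemma swap_comm' {α : Type*} [DecidableEq α] {a b c d : α}
    (hac : a ≠ c) (had : a ≠ d) (hbc : b ≠ c) (hbd : b ≠ d) :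
    Equiv.swap a b * Equiv.swap c d = Equiv.swap c d * Equiv.swap a b := by
  ext x
  simp only [Equiv.Perm.mul_apply, Equiv.swap_apply_def]
  split_ifs <;> simp_all

variable {n : ℕ}

/-- block swap moving pair `j₀` to pair `0` -/
def bs (j₀ : Fin (n+1)) : Equiv.Perm (Fin (2*(n+1))) :=
  Equiv.swap (pr 0 0) (pr j₀ 0) * Equiv.swap (pr 0 1) (pr j₀ 1)

lemma bs_inv (j₀ : Fin (n+1)) : (bs j₀)⁻¹ = bs j₀ := by
  unfold bs
  rw [_root_.mul_inv_rev, Equiv.swap_inv, Equiv.swap_inv]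
  apply swap_comm' <;> (apply pr_ne_of; simp)

lemma bs_apply_00 (j₀ : Fin (n+1)) : bs j₀ (pr 0 0) = pr j₀ 0 := by
  unfold bs
  rw [Equiv.Perm.mul_apply,
    Equiv.swap_apply_of_ne_of_ne (pr_ne_of (by simp)) (pr_ne_of (by simp)),
    Equiv.swap_apply_left]

lemma bs_apply_01 (j₀ : Fin (n+1)) : bs j₀ (pr 0 1) = pr j₀ 1 := by
  unfold bs
  rw [Equiv.Perm.mul_apply, Equiv.swap_apply_left,
    Equiv.swap_apply_of_ne_of_ne (pr_ne_of (by simp)) (pr_ne_of (by simp))]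

lemma bs_apply_j00 (j₀ : Fin (n+1)) : bs j₀ (pr j₀ 0) = pr 0 0 := by
  unfold bs
  rw [Equiv.Perm.mul_apply,
    Equiv.swap_apply_of_ne_of_ne (pr_ne_of (by simp)) (pr_ne_of (by simp)),
    Equiv.swap_apply_right]

lemma bs_apply_j01 (j₀ : Fin (n+1)) : bs j₀ (pr j₀ 1) = pr 0 1 := by
  unfold bs
  rw [Equiv.Perm.mul_apply, Equiv.swap_apply_right,
    Equiv.swap_apply_of_ne_of_ne (pr_ne_of (by simp)) (pr_ne_of (by simp))]

lemma bs_apply_other (j₀ : Fin (n+1)) {j : Fin (n+1)} (h0 : j ≠ 0) (hj : j ≠ j₀) (c : Fin 2) :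
    bs j₀ (pr j c) = pr j c := by
  have h0' : j.1 ≠ 0 := by intro h; apply h0; ext; simp [h]
  have hj' : j.1 ≠ j₀.1 := by simpa [Fin.ext_iff] using hj
  have hc := c.isLt
  unfold bs
  rw [Equiv.Perm.mul_apply,
    Equiv.swap_apply_of_ne_of_ne (pr_ne_of (by simp; try omega)) (pr_ne_of (by simp; try omega)),
    Equiv.swap_apply_of_ne_of_ne (pr_ne_of (by simp; try omega)) (pr_ne_of (by simp; try omega))]

lemma sign_bs (j₀ : Fin (n+1)) : Equiv.Perm.sign (bs j₀) = 1 := by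
  unfold bs
  rcases eq_or_ne j₀ 0 with rfl | hj
  · rw [Equiv.swap_self, Equiv.swap_self]
    simp [Equiv.Perm.one_def]
  · have hj' : j₀.1 ≠ (0 : Fin (n+1)).1 := fun h => hj (Fin.ext h)
    rw [_root_.map_mul,
      Equiv.Perm.sign_swap (pr_ne_of (by rintro ⟨h1, -⟩; exact hj' (by simpa using h1.symm))),
      Equiv.Perm.sign_swap (pr_ne_of (by rintro ⟨h1, -⟩; exact hj' (by simpa using h1.symm)))]
    simp

/-- the pair-repositioning permutation -/
def gp (j₀ : Fin (n+1)) (b : Fin 2) : Equiv.Perm (Fin (2*(n+1))) :=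
  bs j₀ * Equiv.swap (pr 0 0) (pr 0 b)

lemma gp_inv (j₀ : Fin (n+1)) (b : Fin 2) :
    (gp j₀ b)⁻¹ = Equiv.swap (pr 0 0) (pr 0 b) * bs j₀ := by
  unfold gp
  rw [_root_.mul_inv_rev, Equiv.swap_inv, bs_inv]

lemma sign_gp0 (j₀ : Fin (n+1)) : Equiv.Perm.sign (gp j₀ 0) = 1 := by
  unfold gp
  rw [Equiv.swap_self]
  simp [Equiv.Perm.one_def, sign_bs]

lemma sign_gp1 (j₀ : Fin (n+1)) : Equiv.Perm.sign (gp j₀ 1) = -1 := by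
  unfold gp
  rw [_root_.map_mul, sign_bs, Equiv.Perm.sign_swap (pr_ne_of (by simp))]
  simp

end PfP

namespace PfP2
open PfP
variable {n : ℕ}

lemma gp0_eq (j₀ : Fin (n+1)) : gp j₀ 0 = bs j₀ := by
  unfold gp
  rw [Equiv.swap_self, ← Equiv.Perm.one_def, mul_one]

lemma fin2_cases (b : Fin 2) : b = 0 ∨ b = 1 := by
  rcases eq_or_ne b 0 with h | h
  · exact Or.inl h
  · right
    have hb := b.isLt
    have : b.1 ≠ 0 := by intro h'; apply h; ext; simp [h']
    ext
    simp
    omega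

lemma key (M : Matrix (Fin (2*(n+1))) (Fin (2*(n+1))) ℝ)
    (hsk : ∀ p q, M q p = - M p q) (j₀ : Fin (n+1)) (b : Fin 2) (σ : Equiv.Perm (Fin (2*(n+1)))) :
    ((Equiv.Perm.sign (σ * (gp j₀ b)⁻¹) : ℤ) : ℝ)
        * ∏ j : Fin (n+1), M ((σ * (gp j₀ b)⁻¹) (pr j 0)) ((σ * (gp j₀ b)⁻¹) (pr j 1))
      = ((Equiv.Perm.sign σ : ℤ) : ℝ) * ∏ j : Fin (n+1), M (σ (pr j 0)) (σ (pr j 1)) := by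
  rcases fin2_cases b with rfl | rfl
  · -- b = 0
    rw [gp0_eq, bs_inv]
    have hsign : Equiv.Perm.sign (σ * bs j₀) = Equiv.Perm.sign σ := by
      rw [Equiv.Perm.sign_mul, sign_bs, mul_one]
    rw [hsign]
    congr 1
    have hcomp := Equiv.prod_comp (Equiv.swap (0 : Fin (n+1)) j₀)
      (fun j => M ((σ * bs j₀) (pr j 0)) ((σ * bs j₀) (pr j 1)))
    rw [← hcomp]
    apply Finset.prod_congr rfl
    intro j _
    rcases eq_or_ne j 0 with rfl | hj0
    · rw [Equiv.swap_apply_left]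
      simp only [Equiv.Perm.mul_apply, bs_apply_j00, bs_apply_j01]
    rcases eq_or_ne j j₀ with rfl | hjj
    · rw [Equiv.swap_apply_right]
      simp only [Equiv.Perm.mul_apply, bs_apply_00, bs_apply_01]
    · rw [Equiv.swap_apply_of_ne_of_ne hj0 hjj]
      simp only [Equiv.Perm.mul_apply, bs_apply_other j₀ hj0 hjj]
  · -- b = 1
    have hsign : ((Equiv.Perm.sign (σ * (gp j₀ 1)⁻¹) : ℤ) : ℝ) = -((Equiv.Perm.sign σ : ℤ) : ℝ) := by
      rw [Equiv.Perm.sign_mul, Equiv.Perm.sign_inv, sign_gp1]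
      push_cast
      ring
    rw [hsign]
    have happ : ∀ x, (σ * (gp j₀ 1)⁻¹) x = σ (Equiv.swap (pr 0 0) (pr 0 1) ((bs j₀) x)) := by
      intro x
      rw [gp_inv]
      rfl
    have hprod : (∏ j : Fin (n+1),
        M ((σ * (gp j₀ 1)⁻¹) (pr j 0)) ((σ * (gp j₀ 1)⁻¹) (pr j 1)))
        = - ∏ j : Fin (n+1), M (σ (pr j 0)) (σ (pr j 1)) := by
      have hcomp := Equiv.prod_comp (Equiv.swap (0 : Fin (n+1)) j₀)
        (fun j => M ((σ * (gp j₀ 1)⁻¹) (pr j 0)) ((σ * (gp j₀ 1)⁻¹) (pr j 1)))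
      rw [← hcomp]
      have hpt : ∀ j : Fin (n+1),
          M ((σ * (gp j₀ 1)⁻¹) (pr (Equiv.swap (0:Fin (n+1)) j₀ j) 0))
            ((σ * (gp j₀ 1)⁻¹) (pr (Equiv.swap (0:Fin (n+1)) j₀ j) 1))
          = (if j = 0 then (-1:ℝ) else 1) * M (σ (pr j 0)) (σ (pr j 1)) := by
        intro j
        rcases eq_or_ne j 0 with rfl | hj0
        · rw [Equiv.swap_apply_left, if_pos rfl]
          simp only [happ, bs_apply_j00, bs_apply_j01,
            Equiv.swap_apply_left, Equiv.swap_apply_right]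
          rw [hsk]
          ring
        rcases eq_or_ne j j₀ with rfl | hjj
        · have hj0' : j.1 ≠ 0 := by intro h; apply hj0; ext; simp [h]
          rw [Equiv.swap_apply_right, if_neg hj0]
          simp only [happ, bs_apply_00, bs_apply_01]
          rw [Equiv.swap_apply_of_ne_of_ne (pr_ne_of (by simp; try omega)) (pr_ne_of (by simp; try omega)),
            Equiv.swap_apply_of_ne_of_ne (pr_ne_of (by simp; try omega)) (pr_ne_of (by simp; try omega))]
          ring
        · have hj0' : j.1 ≠ 0 := by intro h; apply hj0; ext; simp [h]
          rw [Equiv.swap_apply_of_ne_of_ne hj0 hjj, if_neg hj0]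
          simp only [happ, bs_apply_other j₀ hj0 hjj]
          rw [Equiv.swap_apply_of_ne_of_ne (pr_ne_of (by simp; try omega)) (pr_ne_of (by simp; try omega)),
            Equiv.swap_apply_of_ne_of_ne (pr_ne_of (by simp; try omega)) (pr_ne_of (by simp; try omega))]
          ring
      calc (∏ j : Fin (n+1),
          M ((σ * (gp j₀ 1)⁻¹) (pr (Equiv.swap (0:Fin (n+1)) j₀ j) 0))
            ((σ * (gp j₀ 1)⁻¹) (pr (Equiv.swap (0:Fin (n+1)) j₀ j) 1)))
          = ∏ j : Fin (n+1), ((if j = 0 then (-1:ℝ) else 1) * M (σ (pr j 0)) (σ (pr j 1))) :=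
            Finset.prod_congr rfl (fun j _ => hpt j)
        _ = (∏ j : Fin (n+1), (if j = 0 then (-1:ℝ) else 1))
              * ∏ j : Fin (n+1), M (σ (pr j 0)) (σ (pr j 1)) := Finset.prod_mul_distrib
        _ = - ∏ j : Fin (n+1), M (σ (pr j 0)) (σ (pr j 1)) := by
            rw [Finset.prod_ite_eq' Finset.univ (0 : Fin (n+1)) (fun _ => (-1:ℝ))]
            simp
    rw [hprod]
    ring

end PfP2

namespace PfP3
open PfP PfP2
variable {n : ℕ}

def ι (n : ℕ) : Fin (2*n) → Fin (2*(n+1)) := fun k => ⟨k.1+2, by have := k.isLt; omega⟩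

@[simp] lemma ι_val (k : Fin (2*n)) : (ι n k).1 = k.1 + 2 := rfl

def EE (n : ℕ) : (Fin 2 ⊕ Fin (2*n)) ≃ Fin (2*(n+1)) where
  toFun := Sum.elim (fun b => ⟨b.1, by have := b.isLt; omega⟩) (ι n)
  invFun a := if h : a.1 < 2 then Sum.inl ⟨a.1, h⟩ else Sum.inr ⟨a.1 - 2, by have := a.isLt; omega⟩
  left_inv x := by
    rcases x with b | k
    · simp [ι, b.isLt]
    · have : ¬ ((ι n k).1 < 2) := by simp
      simp [this]
  right_inv a := by
    by_cases h : a.1 < 2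
    · simp [h]
    · simp [h, ι]
      ext
      simp
      omega

def ep (τ : Equiv.Perm (Fin (2*n))) : Equiv.Perm (Fin (2*(n+1))) :=
  (EE n).permCongr (Equiv.sumCongr (Equiv.refl (Fin 2)) τ)

lemma ep_00 (τ : Equiv.Perm (Fin (2*n))) : ep τ (pr 0 0) = pr 0 0 := by
  have h1 : (EE n).symm (pr 0 0) = Sum.inl 0 := by
    rw [Equiv.symm_apply_eq]
    rfl
  simp [ep, Equiv.permCongr_apply, h1]
  rfl

lemma ep_01 (τ : Equiv.Perm (Fin (2*n))) : ep τ (pr 0 1) = pr 0 1 := by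
  have h1 : (EE n).symm (pr 0 1) = Sum.inl 1 := by
    rw [Equiv.symm_apply_eq]
    rfl
  simp [ep, Equiv.permCongr_apply, h1]
  rfl

lemma ep_ι (τ : Equiv.Perm (Fin (2*n))) (k : Fin (2*n)) : ep τ (ι n k) = ι n (τ k) := by
  have h1 : (EE n).symm (ι n k) = Sum.inr k := by
    rw [Equiv.symm_apply_eq]
    rfl
  simp [ep, Equiv.permCongr_apply, h1]
  rfl

lemma sign_ep (τ : Equiv.Perm (Fin (2*n))) : Equiv.Perm.sign (ep τ) = Equiv.Perm.sign τ := by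
  unfold ep
  rw [Equiv.Perm.sign_permCongr, Equiv.Perm.sign_sumCongr]
  simp

lemma pr_succ (j : Fin n) (c : Fin 2) : pr (Fin.succ j) c = ι n (pr j c) := by
  ext
  simp [Fin.val_succ]
  omega

lemma lt_two_cases (x : Fin (2*(n+1))) (hx : x.1 < 2) : x = pr 0 0 ∨ x = pr 0 1 := by
  have : x.1 = 0 ∨ x.1 = 1 := by omega
  rcases this with h | h
  · left; ext; simpa using h
  · right; ext; simpa using h

/-- restriction of a permutation fixing the first pair -/
def rp (σ : Equiv.Perm (Fin (2*(n+1)))) (h0 : ∀ k : Fin (2*n), 2 ≤ (σ (ι n k)).1)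
    (h1 : ∀ k : Fin (2*n), 2 ≤ (σ⁻¹ (ι n k)).1) : Equiv.Perm (Fin (2*n)) where
  toFun k := ⟨(σ (ι n k)).1 - 2, by have := (σ (ι n k)).isLt; have := h0 k; omega⟩
  invFun k := ⟨(σ⁻¹ (ι n k)).1 - 2, by have := (σ⁻¹ (ι n k)).isLt; have := h1 k; omega⟩
  left_inv k := by
    have h2 : ι n ⟨(σ (ι n k)).1 - 2, by have := (σ (ι n k)).isLt; have := h0 k; omega⟩
        = σ (ι n k) := by
      ext
      have := h0 k
      simp
      omega
    ext
    simp only [h2, Equiv.Perm.inv_def, Equiv.symm_apply_apply]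
    simp
  right_inv k := by
    have h2 : ι n ⟨(σ⁻¹ (ι n k)).1 - 2, by have := (σ⁻¹ (ι n k)).isLt; have := h1 k; omega⟩
        = σ⁻¹ (ι n k) := by
      ext
      have := h1 k
      simp at this ⊢
      omega
    ext
    simp only [h2, show ∀ x, σ (σ⁻¹ x) = x from fun x => by simp]
    simp

lemma rp_spec (σ : Equiv.Perm (Fin (2*(n+1)))) (h0 : ∀ k : Fin (2*n), 2 ≤ (σ (ι n k)).1)
    (h1 : ∀ k : Fin (2*n), 2 ≤ (σ⁻¹ (ι n k)).1) (k : Fin (2*n)) :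
    ι n (rp σ h0 h1 k) = σ (ι n k) := by
  ext
  have := h0 k
  simp [rp]
  omega

lemma sum_T (M : Matrix (Fin (2*(n+1))) (Fin (2*(n+1))) ℝ)
    (h01 : M (pr 0 0) (pr 0 1) = 1) :
    ∑ σ ∈ Finset.univ.filter
        (fun σ : Equiv.Perm (Fin (2*(n+1))) => σ (pr 0 0) = pr 0 0 ∧ σ (pr 0 1) = pr 0 1),
      ((Equiv.Perm.sign σ : ℤ) : ℝ) * ∏ j : Fin (n+1), M (σ (pr j 0)) (σ (pr j 1))
      = pfS n (M.submatrix (ι n) (ι n)) := by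
  classical
  unfold pfS
  symm
  apply Finset.sum_bij (fun (τ : Equiv.Perm (Fin (2*n))) (_ : τ ∈ Finset.univ) => ep τ)
  · intro τ _
    simp [Finset.mem_filter, ep_00, ep_01]
  · intro τ _ τ' _ h
    ext k
    have := congrArg (fun (σ : Equiv.Perm (Fin (2*(n+1)))) => σ (ι n k)) h
    simp only [ep_ι] at this
    have hval := congrArg Fin.val this
    simp at hval
    exact hval
  · intro σ hσ
    rw [Finset.mem_filter] at hσ
    obtain ⟨-, hσ0, hσ1⟩ := hσ
    have hinv0 : σ⁻¹ (pr 0 0) = pr 0 0 := by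
      rw [Equiv.Perm.inv_eq_iff_eq]; exact hσ0.symm
    have hinv1 : σ⁻¹ (pr 0 1) = pr 0 1 := by
      rw [Equiv.Perm.inv_eq_iff_eq]; exact hσ1.symm
    have hge : ∀ (ρ : Equiv.Perm (Fin (2*(n+1)))), ρ (pr 0 0) = pr 0 0 → ρ (pr 0 1) = pr 0 1 →
        ∀ k : Fin (2*n), 2 ≤ (ρ (ι n k)).1 := by
      intro ρ h0 h1 k
      by_contra hlt
      push_neg at hlt
      rcases lt_two_cases _ hlt with h | h
      · rw [← h0] at h
        have := congrArg Fin.val (ρ.injective h)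
        simp at this
      · rw [← h1] at h
        have := congrArg Fin.val (ρ.injective h)
        simp at this
    have hgeσ := hge σ hσ0 hσ1
    have hgeσinv := hge σ⁻¹ hinv0 hinv1
    refine ⟨rp σ hgeσ hgeσinv, Finset.mem_univ _, ?_⟩
    ext x
    by_cases hx : x.1 < 2
    · rcases lt_two_cases x hx with rfl | rfl
      · rw [hσ0, ep_00]
      · rw [hσ1, ep_01]
    · have hx2 : x = ι n ⟨x.1 - 2, by have := x.isLt; omega⟩ := by
        ext; simp; omega
      rw [hx2, ep_ι, rp_spec]
  · intro τ _
    rw [sign_ep]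
    congr 1
    rw [Fin.prod_univ_succ]
    have hf0 : M (ep τ (pr 0 0)) (ep τ (pr 0 1)) = 1 := by
      rw [ep_00, ep_01, h01]
    have hfs : ∀ j : Fin n, M (ep τ (pr (Fin.succ j) 0)) (ep τ (pr (Fin.succ j) 1))
        = M.submatrix (ι n) (ι n) (τ (pr j 0)) (τ (pr j 1)) := by
      intro j
      rw [pr_succ, pr_succ, ep_ι, ep_ι]
      rfl
    have : (∏ j : Fin n,
        M.submatrix (ι n) (ι n) (τ (pr j 0)) (τ (pr j 1)))
        = ∏ j : Fin n, M (ep τ (pr (Fin.succ j) 0)) (ep τ (pr (Fin.succ j) 1)) := by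
      apply Finset.prod_congr rfl
      intro j _
      rw [hfs]
    rw [this, hf0, one_mul]

end PfP3

namespace PfP4
open PfP PfP2 PfP3
variable {n : ℕ}

def ob (b : Fin 2) : Fin 2 := ⟨1 - b.1, by omega⟩

lemma ob_zero : ob 0 = 1 := rfl
lemma ob_one : ob 1 = 0 := rfl

lemma gp_apply_00 (j₀ : Fin (n+1)) (b : Fin 2) : gp j₀ b (pr 0 0) = pr j₀ b := by
  have h : gp j₀ b (pr 0 0) = bs j₀ (Equiv.swap (pr 0 0) (pr 0 b) (pr 0 0)) := rfl
  rw [h, Equiv.swap_apply_left]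
  rcases fin2_cases b with rfl | rfl
  · exact bs_apply_00 j₀
  · exact bs_apply_01 j₀

lemma gp_apply_01 (j₀ : Fin (n+1)) (b : Fin 2) : gp j₀ b (pr 0 1) = pr j₀ (ob b) := by
  have h : gp j₀ b (pr 0 1) = bs j₀ (Equiv.swap (pr 0 0) (pr 0 b) (pr 0 1)) := rfl
  rw [h]
  rcases fin2_cases b with rfl | rfl
  · rw [Equiv.swap_self]
    show bs j₀ (pr 0 1) = pr j₀ (ob 0)
    rw [ob_zero, bs_apply_01]
  · rw [Equiv.swap_apply_right, ob_one, bs_apply_00]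

lemma gp_inv_apply_j0b (j₀ : Fin (n+1)) (b : Fin 2) : (gp j₀ b)⁻¹ (pr j₀ b) = pr 0 0 := by
  rw [gp_inv]
  rcases fin2_cases b with rfl | rfl
  · show Equiv.swap (pr 0 0) (pr 0 0) (bs j₀ (pr j₀ 0)) = pr 0 0
    rw [bs_apply_j00, Equiv.swap_self]
    rfl
  · show Equiv.swap (pr 0 0) (pr 0 1) (bs j₀ (pr j₀ 1)) = pr 0 0
    rw [bs_apply_j01, Equiv.swap_apply_right]

lemma gp_inv_apply_j0ob (j₀ : Fin (n+1)) (b : Fin 2) : (gp j₀ b)⁻¹ (pr j₀ (ob b)) = pr 0 1 := by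
  rw [gp_inv]
  rcases fin2_cases b with rfl | rfl
  · show Equiv.swap (pr 0 0) (pr 0 0) (bs j₀ (pr j₀ (ob 0))) = pr 0 1
    rw [ob_zero, bs_apply_j01, Equiv.swap_self]
    rfl
  · show Equiv.swap (pr 0 0) (pr 0 1) (bs j₀ (pr j₀ (ob 1))) = pr 0 1
    rw [ob_one, bs_apply_j00, Equiv.swap_apply_left]

theorem pfS_block (M : Matrix (Fin (2*(n+1))) (Fin (2*(n+1))) ℝ)
    (hsk : ∀ p q, M q p = -M p q)
    (h01 : M (pr 0 0) (pr 0 1) = 1)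
    (h0 : ∀ k, k ≠ pr 0 0 → k ≠ pr 0 1 → M (pr 0 0) k = 0) :
    pfS (n+1) M = (2*(n+1) : ℝ) * pfS n (M.submatrix (ι n) (ι n)) := by
  classical
  have h0' : ∀ k, k ≠ pr 0 0 → k ≠ pr 0 1 → M k (pr 0 0) = 0 := by
    intro k h1 h2
    rw [hsk, h0 k h1 h2, neg_zero]
  have hinner : ∀ (j₀ : Fin (n+1)) (b : Fin 2),
      (∑ σ ∈ Finset.univ.filter
        (fun σ : Equiv.Perm (Fin (2*(n+1))) => σ⁻¹ (pr 0 0) = pr j₀ b),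
        ((Equiv.Perm.sign σ : ℤ) : ℝ) * ∏ j : Fin (n+1), M (σ (pr j 0)) (σ (pr j 1)))
      = ∑ σ ∈ Finset.univ.filter
        (fun σ : Equiv.Perm (Fin (2*(n+1))) => σ (pr 0 0) = pr 0 0 ∧ σ (pr 0 1) = pr 0 1),
        ((Equiv.Perm.sign σ : ℤ) : ℝ) * ∏ j : Fin (n+1), M (σ (pr j 0)) (σ (pr j 1)) := by
    intro j₀ b
    have hstepA : (∑ σ ∈ Finset.univ.filter
        (fun σ : Equiv.Perm (Fin (2*(n+1))) => σ⁻¹ (pr 0 0) = pr j₀ b),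
        ((Equiv.Perm.sign σ : ℤ) : ℝ) * ∏ j : Fin (n+1), M (σ (pr j 0)) (σ (pr j 1)))
        = ∑ σ ∈ Finset.univ.filter
        (fun σ : Equiv.Perm (Fin (2*(n+1))) =>
          σ⁻¹ (pr 0 0) = pr j₀ b ∧ σ (pr j₀ (ob b)) = pr 0 1),
        ((Equiv.Perm.sign σ : ℤ) : ℝ) * ∏ j : Fin (n+1), M (σ (pr j 0)) (σ (pr j 1)) := by
      symm
      apply Finset.sum_subset
      · intro σ hσ
        simp only [Finset.mem_filter] at *
        exact ⟨hσ.1, hσ.2.1⟩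
      · intro σ hσ hσ'
        simp only [Finset.mem_filter, Finset.mem_univ, true_and] at hσ hσ'
        have hc2 : σ (pr j₀ (ob b)) ≠ pr 0 1 := fun h => hσ' ⟨hσ, h⟩
        have hc1 : σ (pr j₀ b) = pr 0 0 := by
          rw [Equiv.Perm.inv_eq_iff_eq] at hσ
          exact hσ.symm
        apply mul_eq_zero_of_right
        apply Finset.prod_eq_zero (Finset.mem_univ j₀)
        rcases fin2_cases b with rfl | rfl
        · rw [ob_zero] at hc2
          rw [hc1]
          apply h0
          · intro h
            rw [← hc1] at h
            have := σ.injective h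
            rw [pr_inj] at this
            exact absurd this.2 (by decide)
          · exact hc2
        · rw [ob_one] at hc2
          rw [hc1]
          apply h0'
          · intro h
            rw [← hc1] at h
            have := σ.injective h
            rw [pr_inj] at this
            exact absurd this.2 (by decide)
          · exact hc2
    rw [hstepA]
    symm
    apply Finset.sum_nbij' (fun σ => σ * (gp j₀ b)⁻¹) (fun σ => σ * gp j₀ b)
    · intro σ hσ
      simp only [Finset.mem_filter, Finset.mem_univ, true_and] at hσ ⊢
      obtain ⟨hσ0, hσ1⟩ := hσ
      constructor
      · have hinv0 : σ⁻¹ (pr 0 0) = pr 0 0 := by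
          rw [Equiv.Perm.inv_eq_iff_eq]; exact hσ0.symm
        rw [_root_.mul_inv_rev, inv_inv]
        show gp j₀ b (σ⁻¹ (pr 0 0)) = pr j₀ b
        rw [hinv0, gp_apply_00]
      · show σ ((gp j₀ b)⁻¹ (pr j₀ (ob b))) = pr 0 1
        rw [gp_inv_apply_j0ob, hσ1]
    · intro σ hσ
      simp only [Finset.mem_filter, Finset.mem_univ, true_and] at hσ ⊢
      obtain ⟨hc1, hc2⟩ := hσ
      have hc1' : σ (pr j₀ b) = pr 0 0 := by
        rw [Equiv.Perm.inv_eq_iff_eq] at hc1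
        exact hc1.symm
      constructor
      · show σ (gp j₀ b (pr 0 0)) = pr 0 0
        rw [gp_apply_00, hc1']
      · show σ (gp j₀ b (pr 0 1)) = pr 0 1
        rw [gp_apply_01, hc2]
    · intro σ _
      group
    · intro σ _
      group
    · intro σ _
      exact (key M hsk j₀ b σ).symm
  -- assemble
  have h1 : pfS (n+1) M = ∑ σ : Equiv.Perm (Fin (2*(n+1))),
      ((Equiv.Perm.sign σ : ℤ) : ℝ) * ∏ j : Fin (n+1), M (σ (pr j 0)) (σ (pr j 1)) := rfl
  rw [h1]
  rw [← Finset.sum_fiberwise Finset.univ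
    (fun σ : Equiv.Perm (Fin (2*(n+1))) => σ⁻¹ (pr 0 0))
    (fun σ => ((Equiv.Perm.sign σ : ℤ) : ℝ) * ∏ j : Fin (n+1), M (σ (pr j 0)) (σ (pr j 1)))]
  rw [← Equiv.sum_comp (pE (n+1)) (fun a => ∑ σ ∈ Finset.univ.filter
      (fun σ : Equiv.Perm (Fin (2*(n+1))) => σ⁻¹ (pr 0 0) = a),
      ((Equiv.Perm.sign σ : ℤ) : ℝ) * ∏ j : Fin (n+1), M (σ (pr j 0)) (σ (pr j 1)))]
  rw [Fintype.sum_prod_type]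
  refine (Finset.sum_congr rfl fun x _ => Finset.sum_congr rfl fun y _ =>
    (hinner x y).trans (sum_T M h01)).trans ?_
  simp only [Finset.sum_const, Finset.card_univ, Fintype.card_fin, smul_eq_mul]
  push_cast
  ring

end PfP4

namespace PfP5
open PfP PfP2 PfP3 PfP4
variable {n : ℕ}

lemma EE_inl0 : EE n (Sum.inl 0) = pr 0 0 := by ext; simp [EE]
lemma EE_inl1 : EE n (Sum.inl 1) = pr 0 1 := by ext; simp [EE]; exact Nat.mod_eq_of_lt (by omega)
lemma EE_inr (k : Fin (2*n)) : EE n (Sum.inr k) = ι n k := rfl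

lemma det_block (M : Matrix (Fin (2*(n+1))) (Fin (2*(n+1))) ℝ)
    (hsk : ∀ p q, M q p = -M p q)
    (h01 : M (pr 0 0) (pr 0 1) = 1)
    (h0 : ∀ k, k ≠ pr 0 0 → k ≠ pr 0 1 → M (pr 0 0) k = 0)
    (h1 : ∀ k, k ≠ pr 0 0 → k ≠ pr 0 1 → M (pr 0 1) k = 0) :
    M.det = (M.submatrix (ι n) (ι n)).det := by
  have hdiag : ∀ p, M p p = 0 := fun p => by have := hsk p p; linarith
  have h10 : M (pr 0 1) (pr 0 0) = -1 := by rw [hsk, h01]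
  have hιne0 : ∀ k : Fin (2*n), ι n k ≠ pr 0 0 := by
    intro k h
    have := congrArg Fin.val h
    simp at this
  have hιne1 : ∀ k : Fin (2*n), ι n k ≠ pr 0 1 := by
    intro k h
    have := congrArg Fin.val h
    simp at this
  have hM : M.submatrix (EE n) (EE n)
      = Matrix.fromBlocks !![0,1;-1,0] 0 0 (M.submatrix (ι n) (ι n)) := by
    ext i j
    rcases i with bi | ki <;> rcases j with bj | kj
    · fin_cases bi <;> fin_cases bj <;>
        simp [Matrix.submatrix_apply, EE_inl0, EE_inl1, hdiag, h01, h10]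
    · fin_cases bi <;>
        simp [Matrix.submatrix_apply, EE_inl0, EE_inl1, EE_inr,
          h0 _ (hιne0 kj) (hιne1 kj), h1 _ (hιne0 kj) (hιne1 kj)]
    · rcases fin2_cases bj with rfl | rfl
      · simp only [Matrix.submatrix_apply, EE_inl0, EE_inr, Matrix.fromBlocks_apply₂₁,
          Matrix.zero_apply]
        rw [hsk, h0 _ (hιne0 ki) (hιne1 ki), neg_zero]
      · simp only [Matrix.submatrix_apply, EE_inl1, EE_inr, Matrix.fromBlocks_apply₂₁,
          Matrix.zero_apply]
        rw [hsk, h1 _ (hιne0 ki) (hιne1 ki), neg_zero]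
    · rfl
  have hd := Matrix.det_submatrix_equiv_self (EE n) M
  rw [← hd, hM, Matrix.det_fromBlocks_zero₂₁]
  have : Matrix.det !![(0:ℝ),1;-1,0] = 1 := by
    rw [Matrix.det_fin_two]
    simp
  rw [this, one_mul]

end PfP5

namespace PfP6
open PfP PfP2 PfP3 PfP4 PfP5
variable {n : ℕ}

lemma skew_entry {m' : ℕ} {A : Matrix (Fin m') (Fin m') ℝ} (hsk : Aᵀ = -A) :
    ∀ p q, A q p = -A p q := by
  intro p q
  have := congrFun (congrFun hsk p) q
  simpa using this

lemma skew_diag {m' : ℕ} {A : Matrix (Fin m') (Fin m') ℝ} (hsk : Aᵀ = -A) :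
    ∀ p, A p p = 0 := by
  intro p
  have := skew_entry hsk p p
  linarith

lemma skew_conj {m' : ℕ} (A B : Matrix (Fin m') (Fin m') ℝ) (hsk : Aᵀ = -A) :
    (Bᵀ*A*B)ᵀ = -(Bᵀ*A*B) := by
  rw [Matrix.transpose_mul, Matrix.transpose_mul, Matrix.transpose_transpose, hsk]
  simp only [Matrix.neg_mul, Matrix.mul_neg, Matrix.mul_assoc]

lemma ne01' : (pr (0 : Fin (n+1)) 0) ≠ pr 0 1 := by
  apply pr_ne_of
  simp

lemma reduce1 (A : Matrix (Fin (2*(n+1))) (Fin (2*(n+1))) ℝ)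
    (hsk : Aᵀ = -A) {i0 j0 : Fin (2*(n+1))} (hne : A i0 j0 ≠ 0) :
    ∃ B : Matrix (Fin (2*(n+1))) (Fin (2*(n+1))) ℝ, B.det ≠ 0 ∧
      (Bᵀ*A*B)ᵀ = -(Bᵀ*A*B) ∧ (Bᵀ*A*B) (pr 0 0) (pr 0 1) ≠ 0 := by
  classical
  have hij : i0 ≠ j0 := by
    intro h
    rw [h] at hne
    exact hne (skew_diag hsk j0)
  set s := Equiv.swap (pr (0:Fin (n+1)) 0) i0 with hs
  have hk : s j0 ≠ pr 0 0 := by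
    intro h
    have h2 := congrArg s h
    rw [Equiv.swap_apply_self, Equiv.swap_apply_left] at h2
    exact hij h2.symm
  set σ := s * Equiv.swap (pr (0:Fin (n+1)) 1) (s j0) with hσ
  have hσ0 : σ (pr 0 0) = i0 := by
    rw [hσ, Equiv.Perm.mul_apply,
      Equiv.swap_apply_of_ne_of_ne ne01' (Ne.symm hk), hs, Equiv.swap_apply_left]
  have hσ1 : σ (pr 0 1) = j0 := by
    rw [hσ, Equiv.Perm.mul_apply, Equiv.swap_apply_left, Equiv.swap_apply_self]
  refine ⟨(1 : Matrix (Fin (2*(n+1))) (Fin (2*(n+1))) ℝ).submatrix id ⇑σ, ?_, ?_, ?_⟩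
  · rw [Matrix.det_permute' σ 1, Matrix.det_one, mul_one]
    rcases Int.units_eq_one_or (Equiv.Perm.sign σ) with h | h <;> simp [h]
  · exact skew_conj A _ hsk
  · have hBT : ((1 : Matrix (Fin (2*(n+1))) (Fin (2*(n+1))) ℝ).submatrix id ⇑σ)ᵀ
        = (1 : Matrix (Fin (2*(n+1))) (Fin (2*(n+1))) ℝ).submatrix ⇑σ id := by
      ext p q
      simp [Matrix.transpose_apply, Matrix.submatrix_apply, Matrix.one_apply, eq_comm]
    have h1 : (1 : Matrix (Fin (2*(n+1))) (Fin (2*(n+1))) ℝ).submatrix ⇑σ id * A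
        = A.submatrix ⇑σ id := by
      ext p q
      rw [Matrix.mul_apply]
      simp [Matrix.one_apply, Matrix.submatrix_apply]
    have h2 : A.submatrix ⇑σ id * (1 : Matrix (Fin (2*(n+1))) (Fin (2*(n+1))) ℝ).submatrix id ⇑σ
        = A.submatrix ⇑σ ⇑σ := by
      ext p q
      rw [Matrix.mul_apply]
      simp [Matrix.one_apply, Matrix.submatrix_apply]
    rw [hBT, h1, h2]
    rw [Matrix.submatrix_apply, hσ0, hσ1]
    exact hne

lemma reduce2 (A : Matrix (Fin (2*(n+1))) (Fin (2*(n+1))) ℝ)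
    (hsk : Aᵀ = -A) (hne : A (pr 0 0) (pr 0 1) ≠ 0) :
    ∃ B : Matrix (Fin (2*(n+1))) (Fin (2*(n+1))) ℝ, B.det ≠ 0 ∧
      (Bᵀ*A*B)ᵀ = -(Bᵀ*A*B) ∧ (Bᵀ*A*B) (pr 0 0) (pr 0 1) = 1 := by
  classical
  set d : Fin (2*(n+1)) → ℝ := fun q => if q = pr 0 1 then (A (pr 0 0) (pr 0 1))⁻¹ else 1 with hd
  refine ⟨Matrix.diagonal d, ?_, skew_conj A _ hsk, ?_⟩
  · rw [Matrix.det_diagonal]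
    apply Finset.prod_ne_zero_iff.mpr
    intro q _
    rw [hd]
    dsimp only
    split_ifs
    · exact inv_ne_zero hne
    · exact one_ne_zero
  · rw [Matrix.diagonal_transpose]
    have : (Matrix.diagonal d * A * Matrix.diagonal d) (pr 0 0) (pr 0 1)
        = d (pr 0 0) * A (pr 0 0) (pr 0 1) * d (pr 0 1) := by
      rw [Matrix.mul_diagonal, Matrix.diagonal_mul]
    rw [this, hd]
    dsimp only
    rw [if_neg ne01', if_pos rfl, one_mul, mul_inv_cancel₀ hne]

lemma reduce3 (A : Matrix (Fin (2*(n+1))) (Fin (2*(n+1))) ℝ)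
    (hsk : Aᵀ = -A) (h1 : A (pr 0 0) (pr 0 1) = 1) :
    ∃ B : Matrix (Fin (2*(n+1))) (Fin (2*(n+1))) ℝ, B.det ≠ 0 ∧
      (Bᵀ*A*B)ᵀ = -(Bᵀ*A*B) ∧ (Bᵀ*A*B) (pr 0 0) (pr 0 1) = 1 ∧
      (∀ k, k ≠ pr 0 0 → k ≠ pr 0 1 → (Bᵀ*A*B) (pr 0 0) k = 0) ∧
      (∀ k, k ≠ pr 0 0 → k ≠ pr 0 1 → (Bᵀ*A*B) (pr 0 1) k = 0) := by
  classical
  have h10 : A (pr 0 1) (pr 0 0) = -1 := by rw [skew_entry hsk, h1]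
  set B : Matrix (Fin (2*(n+1))) (Fin (2*(n+1))) ℝ := Matrix.of (fun p q =>
    (if p = q then (1:ℝ) else 0)
    + (if q ≠ pr 0 0 ∧ q ≠ pr 0 1 ∧ p = pr 0 0 then A (pr 0 1) q else 0)
    + (if q ≠ pr 0 0 ∧ q ≠ pr 0 1 ∧ p = pr 0 1 then -(A (pr 0 0) q) else 0)) with hB
  have hBapp : ∀ p q, B p q =
    (if p = q then (1:ℝ) else 0)
    + (if q ≠ pr 0 0 ∧ q ≠ pr 0 1 ∧ p = pr 0 0 then A (pr 0 1) q else 0)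
    + (if q ≠ pr 0 0 ∧ q ≠ pr 0 1 ∧ p = pr 0 1 then -(A (pr 0 0) q) else 0) := fun p q => rfl
  have hBcol0 : ∀ k, B k (pr 0 0) = if k = pr 0 0 then 1 else 0 := by
    intro k
    rw [hBapp]
    simp
  have hBcol1 : ∀ k, B k (pr 0 1) = if k = pr 0 1 then 1 else 0 := by
    intro k
    rw [hBapp]
    simp
  have hBcol : ∀ (l q : Fin (2*(n+1))), q ≠ pr 0 0 → q ≠ pr 0 1 → B l q =
      (if l = q then (1:ℝ) else 0) + (if l = pr 0 0 then A (pr 0 1) q else 0)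
        + (if l = pr 0 1 then -(A (pr 0 0) q) else 0) := by
    intro l q hq0 hq1
    rw [hBapp]
    simp [hq0, hq1]
  -- determinant
  have hdet : B.det = 1 := by
    have htri : B.BlockTriangular id := by
      intro i j hij
      have hv : (j:ℕ) < (i:ℕ) := hij
      rw [hBapp, if_neg, if_neg, if_neg]
      · ring
      · rintro ⟨hj0, -, rfl⟩
        have : (j:ℕ) < 1 := hv
        exact hj0 (by ext; simp only [pr_val, Fin.val_zero]; omega)
      · rintro ⟨-, -, rfl⟩
        simp at hv
      · intro h
        rw [h] at hv
        exact lt_irrefl _ hv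
    rw [Matrix.det_of_upperTriangular htri]
    apply Finset.prod_eq_one
    intro q _
    rw [hBapp]
    simp
    tauto
  have hdet' : B.det ≠ 0 := by rw [hdet]; exact one_ne_zero
  -- products
  have hMrow : ∀ p q, (Bᵀ*A*B) p q = ∑ k, B k p * (A*B) k q := by
    intro p q
    rw [Matrix.mul_assoc, Matrix.mul_apply]
    simp [Matrix.transpose_apply]
  have hABcol1 : ∀ p, (A*B) p (pr 0 1) = A p (pr 0 1) := by
    intro p
    rw [Matrix.mul_apply]
    simp only [hBcol1, mul_ite, mul_one, mul_zero]
    simp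
  have hABcol : ∀ p q, q ≠ pr 0 0 → q ≠ pr 0 1 → (A*B) p q
      = A p q + A p (pr 0 0) * A (pr 0 1) q + A p (pr 0 1) * (-(A (pr 0 0) q)) := by
    intro p q hq0 hq1
    rw [Matrix.mul_apply]
    have : ∀ l, A p l * B l q = (if l = q then A p l else 0)
        + (if l = pr 0 0 then A p l * A (pr 0 1) q else 0)
        + (if l = pr 0 1 then A p l * (-(A (pr 0 0) q)) else 0) := by
      intro l
      rw [hBcol l q hq0 hq1]
      split_ifs <;> ring
    simp only [this]
    rw [Finset.sum_add_distrib, Finset.sum_add_distrib]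
    simp
  have hMP : ∀ (p : Fin 2) (q : Fin (2*(n+1))), (Bᵀ*A*B) (pr 0 p) q = (A*B) (pr 0 p) q := by
    intro p q
    rw [hMrow]
    rcases fin2_cases p with rfl | rfl
    · simp only [hBcol0, ite_mul, one_mul, zero_mul]
      rw [Finset.sum_ite_eq' Finset.univ (pr 0 0) (fun k => (A*B) k q)]
      simp
    · simp only [hBcol1, ite_mul, one_mul, zero_mul]
      rw [Finset.sum_ite_eq' Finset.univ (pr 0 1) (fun k => (A*B) k q)]
      simp
  refine ⟨B, hdet', skew_conj A B hsk, ?_, ?_, ?_⟩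
  · rw [hMP 0 (pr 0 1), hABcol1, h1]
  · intro k hk0 hk1
    rw [hMP 0 k, hABcol _ _ hk0 hk1, h1, skew_diag hsk]
    ring
  · intro k hk0 hk1
    rw [hMP 1 k, hABcol _ _ hk0 hk1, h10, skew_diag hsk]
    ring

lemma conj_comp {m' : ℕ} (A B C : Matrix (Fin m') (Fin m') ℝ) :
    Cᵀ*(Bᵀ*A*B)*C = (B*C)ᵀ*A*(B*C) := by
  rw [Matrix.transpose_mul]
  simp only [Matrix.mul_assoc]

lemma reduce (A : Matrix (Fin (2*(n+1))) (Fin (2*(n+1))) ℝ)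
    (hsk : Aᵀ = -A) {i0 j0 : Fin (2*(n+1))} (hne : A i0 j0 ≠ 0) :
    ∃ B : Matrix (Fin (2*(n+1))) (Fin (2*(n+1))) ℝ, B.det ≠ 0 ∧
      (Bᵀ*A*B)ᵀ = -(Bᵀ*A*B) ∧ (Bᵀ*A*B) (pr 0 0) (pr 0 1) = 1 ∧
      (∀ k, k ≠ pr 0 0 → k ≠ pr 0 1 → (Bᵀ*A*B) (pr 0 0) k = 0) ∧
      (∀ k, k ≠ pr 0 0 → k ≠ pr 0 1 → (Bᵀ*A*B) (pr 0 1) k = 0) := by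
  obtain ⟨B1, hd1, hsk1, hne1⟩ := reduce1 A hsk hne
  obtain ⟨B2, hd2, hsk2, hone2⟩ := reduce2 _ hsk1 hne1
  rw [conj_comp] at hsk2 hone2
  obtain ⟨B3, hd3, hsk3, h01, hr0, hr1⟩ := reduce3 _ hsk2 hone2
  rw [conj_comp] at hsk3 h01 hr0 hr1
  refine ⟨B1*B2*B3, ?_, ?_, ?_, ?_, ?_⟩
  · rw [Matrix.det_mul, Matrix.det_mul]
    exact mul_ne_zero (mul_ne_zero hd1 hd2) hd3
  · exact hsk3
  · exact h01
  · exact hr0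
  · exact hr1

end PfP6

namespace PfP7
open PfP PfP2 PfP3 PfP4 PfP5 PfP6

lemma main : ∀ (m : ℕ) (A : Matrix (Fin (2*m)) (Fin (2*m)) ℝ), Aᵀ = -A →
    pfS m A ^ 2 = ((2:ℝ)^m * m.factorial)^2 * A.det := by
  intro m
  induction m with
  | zero =>
    intro A _
    haveI : IsEmpty (Fin (2*0)) := inferInstanceAs (IsEmpty (Fin 0))
    have h1 : pfS 0 A = 1 := by
      unfold pfS
      have huniq : ∀ σ : Equiv.Perm (Fin (2*0)), σ = 1 :=
        fun σ => Equiv.ext (fun x => isEmptyElim x)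
      calc (∑ σ : Equiv.Perm (Fin (2*0)),
            ((Equiv.Perm.sign σ : ℤ) : ℝ) * ∏ j : Fin 0, A (σ (pr j 0)) (σ (pr j 1)))
          = ∑ _σ : Equiv.Perm (Fin (2*0)), 1 :=
            Finset.sum_congr rfl (fun σ _ => by rw [huniq σ]; simp)
        _ = 1 := by
            rw [Finset.sum_const, Finset.card_univ, Fintype.card_perm]
            simp
    rw [h1, Matrix.det_isEmpty]
    simp [Nat.factorial]
  | succ n ih =>
    intro A hsk
    rcases eq_or_ne A 0 with rfl | hA0
    · have h0 : pfS (n+1) (0 : Matrix (Fin (2*(n+1))) (Fin (2*(n+1))) ℝ) = 0 := by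
        unfold pfS
        apply Finset.sum_eq_zero
        intro σ _
        have : (∏ j : Fin (n+1),
            (0 : Matrix (Fin (2*(n+1))) (Fin (2*(n+1))) ℝ) (σ (pr j 0)) (σ (pr j 1))) = 0 :=
          Finset.prod_eq_zero (Finset.mem_univ 0) (by simp)
        rw [this, mul_zero]
      rw [h0]
      haveI : Nonempty (Fin (2*(n+1))) := ⟨pr 0 0⟩
      rw [Matrix.det_zero]
      ring
    · obtain ⟨i0, j0, hne⟩ : ∃ i j, A i j ≠ 0 := by
        by_contra h
        push_neg at h
        exact hA0 (by ext i j; simpa using h i j)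
      obtain ⟨B, hdB, hskM, h01, hr0, hr1⟩ := reduce A hsk hne
      set M := Bᵀ*A*B with hM
      have hskM' : ∀ p q, M q p = -M p q := skew_entry hskM
      have hpfM : pfS (n+1) M = B.det * pfS (n+1) A := pfS_conj (n+1) A B
      have hblock := pfS_block M hskM' h01 hr0
      have hdetb := det_block M hskM' h01 hr0 hr1
      set M' := M.submatrix (ι n) (ι n) with hM'
      have hskM2 : M'ᵀ = -M' := by
        ext p q
        simp only [Matrix.transpose_apply, Matrix.neg_apply, hM', Matrix.submatrix_apply]
        exact hskM' _ _
      have hih := ih M' hskM2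
      have hdetM : M.det = B.det^2 * A.det := by
        rw [hM, Matrix.det_mul, Matrix.det_mul, Matrix.det_transpose]
        ring
      have hB2 : B.det^2 ≠ 0 := pow_ne_zero _ hdB
      have e2 : B.det^2 * pfS (n+1) A ^2
          = B.det^2 * (((2:ℝ)^(n+1) * (n+1).factorial)^2 * A.det) := by
        calc B.det^2 * pfS (n+1) A^2 = (B.det * pfS (n+1) A)^2 := by ring
          _ = ((2*(n+1):ℝ) * pfS n M')^2 := by rw [← hpfM, hblock]
          _ = (2*(n+1):ℝ)^2 * (pfS n M')^2 := by ring
          _ = (2*(n+1):ℝ)^2 * (((2:ℝ)^n * n.factorial)^2 * M'.det) := by rw [hih]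
          _ = (2*(n+1):ℝ)^2 * (((2:ℝ)^n * n.factorial)^2 * M.det) := by rw [← hdetb]
          _ = (2*(n+1):ℝ)^2 * (((2:ℝ)^n * n.factorial)^2 * (B.det^2 * A.det)) := by rw [hdetM]
          _ = B.det^2 * (((2:ℝ)^(n+1) * (n+1).factorial)^2 * A.det) := by
              rw [Nat.factorial_succ]
              push_cast
              ring
      exact mul_left_cancel₀ hB2 e2

end PfP7

/-- the square of the Pfaffian of a `2n × 2n` skew-symmetric
matrix equals its determinant. -/
theorem stmt5 (n : ℕ) (A : Matrix (Fin (2 * n)) (Fin (2 * n)) ℝ) (hA : Aᵀ = -A) :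
    pf n A ^ 2 = A.det := by
  have h := PfP7.main n A hA
  have hc : ((2:ℝ)^n * n.factorial) ≠ 0 := by
    apply mul_ne_zero
    · positivity
    · exact_mod_cast Nat.cast_ne_zero.mpr (Nat.factorial_ne_zero n)
  rw [PfP.pf_eq]
  rw [mul_pow, h]
  field_simp
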